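/- For any two points x, y in Cantor space 2^ω, if x E₀ y (i.e. x(n) = y(n) for all but finitely many n), then there is a finite chain x = z₀, z₁, ..., z_m = y such that each consecutive pair (z_i, z_{i+1}) is a neighbouring pair, i.e. there exist k ∈ ω and z ∈ 2^ω with {z_i, z_{i+1}} = {0^k⌢⟨0⟩⌢z, 0^k⌢⟨1⟩⌢z}. -/

import Mathlib

/-- Concatenation `0^k ⌢ ⟨i⟩ ⌢ z` as a point of Cantor space `2^ω`. -/
def zcat (k : ℕ) (i : Bool) (z : ℕ → Bool) : ℕ → Bool :=
  fun n => if n < k then false else if n = k then i else z (n - k - 1)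

/-- The Vitali equivalence E₀ on `2^ω`. -/
def E0 (x y : ℕ → Bool) : Prop := ∃ N, ∀ n ≥ N, x n = y n

/-- `(x, y)` is a neighbouring pair: `x = 0^k⌢⟨0⟩⌢z`, `y = 0^k⌢⟨1⟩⌢z` or vice versa. -/
def Nbr (x y : ℕ → Bool) : Prop :=
  ∃ k z, (x = zcat k false z ∧ y = zcat k true z) ∨ (x = zcat k true z ∧ y = zcat k false z)

/-!
Clearing the bits of `x` below `N` one at a time, from the bottom up, moves along neighbouring
pairs: when the bits below `k` are already `0`, the point is `0^k⌢⟨x k⟩⌢z`, and setting bit `k`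
to `0` is either no move or a single neighbouring step. So `x` and `y` are both connected to
their common truncation `0^N⌢(x↾[N,∞)) = 0^N⌢(y↾[N,∞))` whenever they agree from `N` on.
-/

instance : Std.Symm Nbr where
  symm _ _ := fun ⟨k, z, h⟩ => ⟨k, z, h.symm.imp And.symm And.symm⟩

theorem reflTransGen_nbr_zcat_false (k : ℕ) (b : Bool) (z : ℕ → Bool) :
    Relation.ReflTransGen Nbr (zcat k b z) (zcat k false z) := by
  cases b
  · rfl
  · exact .single ⟨k, z, .inr ⟨rfl, rfl⟩⟩

def clearBelow (N : ℕ) (x : ℕ → Bool) : ℕ → Bool :=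
  fun n => if n < N then false else x n

theorem clearBelow_eq_zcat (N : ℕ) (x : ℕ → Bool) :
    clearBelow N x = zcat N (x N) (fun m => x (m + N + 1)) := by
  funext n
  simp only [clearBelow, zcat]
  split_ifs with _ hn <;> first | rfl | (subst hn; rfl) | (congr 1; omega)

theorem clearBelow_succ_eq_zcat (N : ℕ) (x : ℕ → Bool) :
    clearBelow (N + 1) x = zcat N false (fun m => x (m + N + 1)) := by
  funext n
  simp only [clearBelow, zcat]
  split_ifs <;> first | rfl | omega | (congr 1; omega)

theorem reflTransGen_nbr_clearBelow (N : ℕ) (x : ℕ → Bool) :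
    Relation.ReflTransGen Nbr x (clearBelow N x) := by
  induction N with
  | zero => rfl
  | succ N ih =>
    rw [clearBelow_succ_eq_zcat]
    exact ih.trans (clearBelow_eq_zcat N x ▸ reflTransGen_nbr_zcat_false N (x N) _)

theorem clearBelow_eq_of_forall_ge {x y : ℕ → Bool} {N : ℕ} (h : ∀ n ≥ N, x n = y n) :
    clearBelow N x = clearBelow N y := by
  funext n
  simp only [clearBelow]
  split_ifs with hn
  · rfl
  · exact h n (not_lt.mp hn)

/-- If `x E₀ y` then `x` and `y` are connected by a finite chain of neighbouring pairs. -/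
theorem stmt0 (x y : ℕ → Bool) (h : E0 x y) : Relation.ReflTransGen Nbr x y := by
  obtain ⟨N, hN⟩ := h
  have hy : Relation.ReflTransGen Nbr (clearBelow N y) y :=
    Std.Symm.symm _ _ (reflTransGen_nbr_clearBelow N y)
  exact (reflTransGen_nbr_clearBelow N x).trans (clearBelow_eq_of_forall_ge hN ▸ hy)
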